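/- arXiv:0908.4460 — 2 statements merged into one kernel-verified Lean document; each statement's English description precedes it below -/
import Mathlib

section
/- For f(z) = z², the radial potential V(x) = f(|x|²/2) = |x|⁴/4 (the quartic anharmonic potential) satisfies f'' = 2 > 0, f''' = 0 ≥ 0 and f⁽⁴⁾ = 0 ≥ 0 everywhere; consequently, for all x, v ∈ ℝⁿ and all orthonormal u, w ∈ ℝⁿ, ∂²_s ⟨u, Hess V(x+t(v+sw)) u⟩|_{s=0} ≥ 2t² for every t. -/
/-!
With `f z = z²` we have `f' r = 2r` and `f'' = 2`, so along the line `p(s) = x + t(v + sw)` the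
expression is `|p(s)|² + 2⟨p(s), u⟩²`. Since `u ⊥ w`, `⟨p(s), u⟩` does not depend on `s`, and
`|p(s)|²` is a quadratic polynomial in `s` with leading coefficient `t²|w|² = t²`. Hence the second
derivative equals `2t²`.
-/

open Finset

theorem hasDerivAt_quadratic (a b c s : ℝ) :
    HasDerivAt (fun s : ℝ => a + b * s + c * s ^ 2) (b + 2 * c * s) s :=
  (((hasDerivAt_const s a).add ((hasDerivAt_id' s).const_mul b)).add
    ((hasDerivAt_pow 2 s).const_mul c)).congr_deriv (by simp; ring)

theorem iteratedDeriv_two_of_eq_quadratic {g : ℝ → ℝ} {a b c : ℝ}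
    (hg : ∀ s, g s = a + b * s + c * s ^ 2) (s : ℝ) : iteratedDeriv 2 g s = 2 * c := by
  obtain rfl : g = fun s => a + b * s + c * s ^ 2 := funext hg
  have hderiv : deriv (fun s : ℝ => a + b * s + c * s ^ 2) = fun s => b + 2 * c * s + 0 * s ^ 2 :=
    funext fun s => by simpa using (hasDerivAt_quadratic a b c s).deriv
  rw [iteratedDeriv_succ, iteratedDeriv_one, hderiv, (hasDerivAt_quadratic _ _ _ s).deriv]
  ring

section

variable {ι : Type*} [Fintype ι]

theorem sum_add_mul_sq (p q : ι → ℝ) (s : ℝ) :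
    ∑ i, (p i + s * q i) ^ 2 = ∑ i, p i ^ 2 + (2 * ∑ i, p i * q i) * s + (∑ i, q i ^ 2) * s ^ 2 := by
  simp only [add_sq, sum_add_distrib, mul_sum, sum_mul]
  congr 1; congr 1
  all_goals exact sum_congr rfl fun i _ => by ring

theorem sum_add_mul_mul (p q u : ι → ℝ) (s : ℝ) :
    ∑ i, (p i + s * q i) * u i = ∑ i, p i * u i + s * ∑ i, q i * u i := by
  simp only [add_mul, sum_add_distrib, mul_sum, mul_assoc]

end

theorem anharmonic_oscillator_quartic_potential_general
    (n : ℕ) (f : ℝ → ℝ) (hf : ∀ z, f z = z ^ 2)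
    (x v u w : Fin n → ℝ)
    (hw : ∑ i, w i ^ 2 = 1) (huw : ∑ i, u i * w i = 0) :
    (∀ y : Fin n → ℝ, f ((∑ i, y i ^ 2) / 2) = (∑ i, y i ^ 2) ^ 2 / 4) ∧
    (∀ z, iteratedDeriv 2 f z = 2) ∧
    (∀ z, iteratedDeriv 3 f z = 0) ∧
    (∀ z, iteratedDeriv 4 f z = 0) ∧
    ∀ t : ℝ,
      2 * t ^ 2 ≤ iteratedDeriv 2 (fun s : ℝ =>
        deriv f ((∑ i, (x i + t * (v i + s * w i)) ^ 2) / 2)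
          + iteratedDeriv 2 f ((∑ i, (x i + t * (v i + s * w i)) ^ 2) / 2)
              * (∑ i, (x i + t * (v i + s * w i)) * u i) ^ 2) 0 := by
  obtain rfl : f = fun z => z ^ 2 := funext hf
  refine ⟨fun y => by ring, fun z => by simp [iteratedDeriv_pow], fun z => by simp,
    fun z => by simp, fun t => ?_⟩
  have hline : ∀ s i, x i + t * (v i + s * w i) = (x i + t * v i) + s * (t * w i) :=
    fun _ _ => by ring
  have hw' : ∑ i, (t * w i) ^ 2 = t ^ 2 := by simp [mul_pow, ← mul_sum, hw]
  have huw' : ∑ i, (t * w i) * u i = 0 := by simp [mul_assoc, ← mul_sum, mul_comm (w _), huw]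
  refine (iteratedDeriv_two_of_eq_quadratic
    (a := ∑ i, (x i + t * v i) ^ 2 + 2 * (∑ i, (x i + t * v i) * u i) ^ 2)
    (b := 2 * ∑ i, (x i + t * v i) * (t * w i)) (c := t ^ 2) (fun s => ?_) 0).ge
  simp only [hline, sum_add_mul_sq, sum_add_mul_mul, hw', huw', deriv_pow_field,
    iteratedDeriv_pow, Nat.descFactorial_self, Nat.factorial_two]
  push_cast
  ring

/-- For `f(z) = z²` the radial potential `V(x) = f(|x|²/2) = |x|⁴/4`
(the quartic anharmonic potential) satisfies `f'' = 2 > 0`, `f''' = 0` and `f⁽⁴⁾ = 0`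
everywhere; consequently for all `x, v` and all orthonormal `u, w`, the second
`s`-derivative at `s = 0` of `s ↦ ⟨u, Hess V(x + t(v+sw)) u⟩` is at least `2t²` for
every `t`, where `Hess V(p)(u,u) = f'(|p|²/2)|u|² + f''(|p|²/2)⟨p,u⟩²`. -/
theorem anharmonic_oscillator_quartic_potential
    (n : ℕ) (f : ℝ → ℝ) (hf : ∀ z, f z = z ^ 2)
    (x v u w : Fin n → ℝ)
    (hu : ∑ i, u i ^ 2 = 1) (hw : ∑ i, w i ^ 2 = 1) (huw : ∑ i, u i * w i = 0) :
    (∀ y : Fin n → ℝ, f ((∑ i, y i ^ 2) / 2) = (∑ i, y i ^ 2) ^ 2 / 4) ∧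
    (∀ z, iteratedDeriv 2 f z = 2) ∧
    (∀ z, iteratedDeriv 3 f z = 0) ∧
    (∀ z, iteratedDeriv 4 f z = 0) ∧
    ∀ t : ℝ,
      2 * t ^ 2 ≤ iteratedDeriv 2 (fun s : ℝ =>
        deriv f ((∑ i, (x i + t * (v i + s * w i)) ^ 2) / 2)
          + iteratedDeriv 2 f ((∑ i, (x i + t * (v i + s * w i)) ^ 2) / 2)
              * (∑ i, (x i + t * (v i + s * w i)) * u i) ^ 2) 0 :=
  anharmonic_oscillator_quartic_potential_general n f hf x v u w hw huw
end

section
/- Let φ(t,τ) be a smooth family of solutions of γ'' = -∇V(γ) in ℝⁿ, all with common endpoint φ(1,τ) = y (so ∂_τ φ|_{t=1} = 0). Then ∂_τ[½|∂_t φ|² + V(φ)] evaluated at t = 0 equals -⟨∂_τ φ, ∂_t φ⟩|_{t=0} + 2∫₀¹ dV(∂_τ φ) dt. (Key identity in the proof of the Jacobi-map formula for the cross-curvature.) -/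
open RealInnerProductSpace

section Aux

set_option linter.unusedSectionVars false
variable {E : Type*} [NormedAddCommGroup E] [InnerProductSpace ℝ E] [CompleteSpace E]

lemma grad_inner' (V : E → ℝ) (x v : E) :
    ⟪gradient V x, v⟫ = fderiv ℝ V x v := by
  rw [gradient]
  exact InnerProductSpace.toDual_symm_apply

lemma hasDerivAt_slice_t (Φ : ℝ × ℝ → E) (hΦ : ContDiff ℝ (⊤ : ℕ∞) Φ) (t τ : ℝ) :
    HasDerivAt (fun t' => Φ (t', τ)) (fderiv ℝ Φ (t, τ) (1, 0)) t := by
  have h1 : HasDerivAt (fun t' : ℝ => ((t' : ℝ), τ)) ((1 : ℝ), (0 : ℝ)) t :=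
    (hasDerivAt_id t).prodMk (hasDerivAt_const t τ)
  exact ((hΦ.differentiable (by simp)) (t, τ)).hasFDerivAt.comp_hasDerivAt t h1

lemma hasDerivAt_slice_tau (Φ : ℝ × ℝ → E) (hΦ : ContDiff ℝ (⊤ : ℕ∞) Φ) (t τ : ℝ) :
    HasDerivAt (fun τ' => Φ (t, τ')) (fderiv ℝ Φ (t, τ) (0, 1)) τ := by
  have h1 : HasDerivAt (fun τ' : ℝ => ((t : ℝ), (τ' : ℝ))) ((0 : ℝ), (1 : ℝ)) τ :=
    (hasDerivAt_const τ t).prodMk (hasDerivAt_id τ)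
  exact ((hΦ.differentiable (by simp)) (t, τ)).hasFDerivAt.comp_hasDerivAt τ h1

lemma fderiv_vec_smooth (Φ : ℝ × ℝ → E) (hΦ : ContDiff ℝ (⊤ : ℕ∞) Φ) (v : ℝ × ℝ) :
    ContDiff ℝ (⊤ : ℕ∞) (fun p => fderiv ℝ Φ p v) :=
  (hΦ.fderiv_right (by simp)).clm_apply contDiff_const

lemma fderiv_fderiv_vec (Φ : ℝ × ℝ → E) (hΦ : ContDiff ℝ (⊤ : ℕ∞) Φ) (v p : ℝ × ℝ) :
    fderiv ℝ (fun q => fderiv ℝ Φ q v) p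
      = (ContinuousLinearMap.apply ℝ E v).comp (fderiv ℝ (fderiv ℝ Φ) p) := by
  have h1 : HasFDerivAt (fderiv ℝ Φ) (fderiv ℝ (fderiv ℝ Φ) p) p :=
    (((hΦ.fderiv_right (m := (⊤ : ℕ∞)) (by simp)).differentiable (by simp)) p).hasFDerivAt
  exact ((ContinuousLinearMap.apply ℝ E v).hasFDerivAt.comp p h1).fderiv

lemma clairaut (Φ : ℝ × ℝ → E) (hΦ : ContDiff ℝ (⊤ : ℕ∞) Φ) (p v w : ℝ × ℝ) :
    fderiv ℝ (fun q => fderiv ℝ Φ q v) p w = fderiv ℝ (fun q => fderiv ℝ Φ q w) p v := by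
  rw [fderiv_fderiv_vec Φ hΦ v p, fderiv_fderiv_vec Φ hΦ w p]
  have h1 : ∀ y, HasFDerivAt Φ (fderiv ℝ Φ y) y :=
    fun y => ((hΦ.differentiable (by simp)) y).hasFDerivAt
  have h2 : HasFDerivAt (fderiv ℝ Φ) (fderiv ℝ (fderiv ℝ Φ) p) p :=
    (((hΦ.fderiv_right (m := (⊤ : ℕ∞)) (by simp)).differentiable (by simp)) p).hasFDerivAt
  simpa using second_derivative_symmetric h1 h2 w v

end Aux

/-- Let `φ(t,τ)` be a smooth family of solutions of `γ'' = -∇V(γ)` in `ℝⁿ`,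
all with common endpoint `φ(1,τ) = y` (so `∂_τ φ|_{t=1} = 0`). Then
`∂_τ[½|∂_t φ|² + V(φ)]` evaluated at `t = 0` equals
`-⟨∂_τ φ, ∂_t φ⟩|_{t=0} + 2∫₀¹ dV(∂_τ φ) dt`. -/
theorem key_energy_identity
    (n : ℕ) (V : EuclideanSpace ℝ (Fin n) → ℝ) (hV : ContDiff ℝ (⊤ : ℕ∞) V)
    (y : EuclideanSpace ℝ (Fin n))
    (φ : ℝ → ℝ → EuclideanSpace ℝ (Fin n))
    (hφ : ContDiff ℝ (⊤ : ℕ∞) fun p : ℝ × ℝ => φ p.1 p.2)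
    (hNewton : ∀ τ t : ℝ, deriv (deriv fun t' => φ t' τ) t = -gradient V (φ t τ))
    (hend : ∀ τ : ℝ, φ 1 τ = y) :
    ∀ τ : ℝ,
      deriv (fun τ' => (1/2) * ‖deriv (fun t => φ t τ') 0‖ ^ 2 + V (φ 0 τ')) τ
        = -⟪deriv (fun τ' => φ 0 τ') τ, deriv (fun t => φ t τ) 0⟫
          + 2 * ∫ t in (0:ℝ)..1, ⟪gradient V (φ t τ), deriv (fun τ' => φ t τ') τ⟫ := by
  intro τ
  set Φ : ℝ × ℝ → EuclideanSpace ℝ (Fin n) := fun p => φ p.1 p.2 with hΦdef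
  have hΦ : ContDiff ℝ (⊤ : ℕ∞) Φ := hφ
  set F : ℝ × ℝ → EuclideanSpace ℝ (Fin n) := fun p => fderiv ℝ Φ p (1, 0) with hFdef
  set G : ℝ × ℝ → EuclideanSpace ℝ (Fin n) := fun p => fderiv ℝ Φ p (0, 1) with hGdef
  have hFsm : ContDiff ℝ (⊤ : ℕ∞) F := fderiv_vec_smooth Φ hΦ _
  have hGsm : ContDiff ℝ (⊤ : ℕ∞) G := fderiv_vec_smooth Φ hΦ _
  -- slice derivatives of φ
  have hDt : ∀ (t τ' : ℝ), HasDerivAt (fun t' => φ t' τ') (F (t, τ')) t := fun t τ' =>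
    hasDerivAt_slice_t Φ hΦ t τ'
  have hDτ : ∀ (t τ' : ℝ), HasDerivAt (fun τ'' => φ t τ'') (G (t, τ')) τ' := fun t τ' =>
    hasDerivAt_slice_tau Φ hΦ t τ'
  have derivF : ∀ (t τ' : ℝ), deriv (fun t' => φ t' τ') t = F (t, τ') := fun t τ' =>
    (hDt t τ').deriv
  have derivG : ∀ (t τ' : ℝ), deriv (fun τ'' => φ t τ'') τ' = G (t, τ') := fun t τ' =>
    (hDτ t τ').deriv
  -- slice derivatives of F and G
  have hFt : ∀ (t τ' : ℝ), HasDerivAt (fun t' => F (t', τ')) (fderiv ℝ F (t, τ') (1, 0)) t :=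
    fun t τ' => hasDerivAt_slice_t F hFsm t τ'
  have hFτ : ∀ (t τ' : ℝ), HasDerivAt (fun τ'' => F (t, τ'')) (fderiv ℝ F (t, τ') (0, 1)) τ' :=
    fun t τ' => hasDerivAt_slice_tau F hFsm t τ'
  have hGt : ∀ (t τ' : ℝ), HasDerivAt (fun t' => G (t', τ')) (fderiv ℝ G (t, τ') (1, 0)) t :=
    fun t τ' => hasDerivAt_slice_t G hGsm t τ'
  -- Newton in terms of F
  have hN : ∀ (τ' t : ℝ), fderiv ℝ F (t, τ') (1, 0) = -gradient V (φ t τ') := by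
    intro τ' t
    have h1 : (deriv fun t' => φ t' τ') = fun t' => F (t', τ') := funext fun t' => derivF t' τ'
    have := hNewton τ' t
    rw [h1, (hFt t τ').deriv] at this
    exact this
  -- Clairaut: ∂_τ F = ∂_t G
  have hFG : ∀ (t τ' : ℝ), fderiv ℝ F (t, τ') (0, 1) = fderiv ℝ G (t, τ') (1, 0) :=
    fun t τ' => clairaut Φ hΦ (t, τ') (1, 0) (0, 1)
  -- inner with gradient
  have hgrad : ∀ (x v : EuclideanSpace ℝ (Fin n)), ⟪gradient V x, v⟫ = fderiv ℝ V x v := grad_inner' V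
  -- chain rule for V along slices
  have hVt : ∀ (t τ' : ℝ),
      HasDerivAt (fun t' => V (φ t' τ')) ⟪gradient V (φ t τ'), F (t, τ')⟫ t := by
    intro t τ'
    rw [hgrad]
    exact ((hV.differentiable (by simp)) (φ t τ')).hasFDerivAt.comp_hasDerivAt t (hDt t τ')
  have hVτ : ∀ (t τ' : ℝ),
      HasDerivAt (fun τ'' => V (φ t τ'')) ⟪gradient V (φ t τ'), G (t, τ')⟫ τ' := by
    intro t τ'
    rw [hgrad]
    exact ((hV.differentiable (by simp)) (φ t τ')).hasFDerivAt.comp_hasDerivAt τ' (hDτ t τ')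
  -- energy conservation in t
  have econst : ∀ (t τ' : ℝ),
      (1/2) * ⟪F (t, τ'), F (t, τ')⟫ + V (φ t τ')
        = (1/2) * ⟪F (0, τ'), F (0, τ')⟫ + V (φ 0 τ') := by
    intro t τ'
    have hE : ∀ s : ℝ, HasDerivAt
        (fun t' => (1/2) * ⟪F (t', τ'), F (t', τ')⟫ + V (φ t' τ')) 0 s := by
      intro s
      have h1 := ((hFt s τ').inner ℝ (hFt s τ')).const_mul (1/2 : ℝ)
      have h2 := h1.add (hVt s τ')
      refine h2.congr_deriv ?_
      rw [hN τ' s, inner_neg_left, inner_neg_right,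
        real_inner_comm (F (s, τ')) (gradient V (φ s τ'))]
      ring
    have hdiff : Differentiable ℝ
        (fun t' => (1/2) * ⟪F (t', τ'), F (t', τ')⟫ + V (φ t' τ')) :=
      fun s => (hE s).differentiableAt
    have hzero : ∀ s, deriv (fun t' => (1/2) * ⟪F (t', τ'), F (t', τ')⟫ + V (φ t' τ')) s = 0 :=
      fun s => (hE s).deriv
    exact is_const_of_deriv_eq_zero hdiff hzero t 0
  -- τ-derivative of the energy at each t
  set H : ℝ → ℝ := fun t =>
    ⟪F (t, τ), fderiv ℝ F (t, τ) (0, 1)⟫ + ⟪gradient V (φ t τ), G (t, τ)⟫ with hHdef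
  have hHt : ∀ t : ℝ, HasDerivAt
      (fun τ' => (1/2) * ⟪F (t, τ'), F (t, τ')⟫ + V (φ t τ')) (H t) τ := by
    intro t
    have h1 := (((hFτ t τ).inner ℝ (hFτ t τ)).const_mul (1/2 : ℝ)).add (hVτ t τ)
    refine h1.congr_deriv ?_
    simp only [hHdef]
    rw [real_inner_comm ((fderiv ℝ F (t, τ)) (0, 1)) (F (t, τ))]
    ring
  have hHconst : ∀ t : ℝ, H t = H 0 := by
    intro t
    have h1 : (fun τ' => (1/2) * ⟪F (t, τ'), F (t, τ')⟫ + V (φ t τ'))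
        = (fun τ' => (1/2) * ⟪F (0, τ'), F (0, τ')⟫ + V (φ 0 τ')) :=
      funext fun τ' => econst t τ'
    have h2 := (hHt t).deriv
    rw [h1, (hHt 0).deriv] at h2
    exact h2.symm
  -- derivative of g(t) = ⟪F, G⟫ in t
  have hg : ∀ t : ℝ, HasDerivAt (fun t' => ⟪F (t', τ), G (t', τ)⟫)
      (-⟪gradient V (φ t τ), G (t, τ)⟫ + ⟪F (t, τ), fderiv ℝ F (t, τ) (0, 1)⟫) t := by
    intro t
    have h1 := (hFt t τ).inner ℝ (hGt t τ)
    rw [hN τ t, ← hFG t τ] at h1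
    refine h1.congr_deriv ?_
    rw [inner_neg_left]
    ring
  -- relation H = g' + 2⟪∇V, G⟫
  have hHg : ∀ t : ℝ, H t
      = (-⟪gradient V (φ t τ), G (t, τ)⟫ + ⟪F (t, τ), fderiv ℝ F (t, τ) (0, 1)⟫)
        + 2 * ⟪gradient V (φ t τ), G (t, τ)⟫ := by
    intro t; rw [hHdef]; ring
  -- continuity facts
  have hcφ : Continuous fun t : ℝ => φ t τ :=
    hΦ.continuous.comp (continuous_id.prodMk continuous_const)
  have hcgrad : Continuous (gradient V) := by
    have : Continuous (fderiv ℝ V) := hV.continuous_fderiv (by simp)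
    exact (InnerProductSpace.toDual ℝ (EuclideanSpace ℝ (Fin n))).symm.continuous.comp this
  have hcG : Continuous fun t : ℝ => G (t, τ) :=
    hGsm.continuous.comp (continuous_id.prodMk continuous_const)
  have hcF : Continuous fun t : ℝ => F (t, τ) :=
    hFsm.continuous.comp (continuous_id.prodMk continuous_const)
  have hcF2 : Continuous fun t : ℝ => fderiv ℝ F (t, τ) (0, 1) :=
    (fderiv_vec_smooth F hFsm (0, 1)).continuous.comp (continuous_id.prodMk continuous_const)
  have hcInt : Continuous fun t : ℝ => ⟪gradient V (φ t τ), G (t, τ)⟫ :=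
    (hcgrad.comp hcφ).inner hcG
  have hcg' : Continuous fun t : ℝ =>
      -⟪gradient V (φ t τ), G (t, τ)⟫ + ⟪F (t, τ), fderiv ℝ F (t, τ) (0, 1)⟫ :=
    hcInt.neg.add (hcF.inner hcF2)
  -- FTC
  have hFTC : ∫ t in (0:ℝ)..1,
      (-⟪gradient V (φ t τ), G (t, τ)⟫ + ⟪F (t, τ), fderiv ℝ F (t, τ) (0, 1)⟫)
      = ⟪F (1, τ), G (1, τ)⟫ - ⟪F (0, τ), G (0, τ)⟫ :=
    intervalIntegral.integral_eq_sub_of_hasDerivAt (fun t _ => hg t)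
      (hcg'.intervalIntegrable 0 1)
  -- G(1, τ) = 0
  have hG1 : G (1, τ) = 0 := by
    have h1 : (fun τ'' => φ 1 τ'') = fun _ : ℝ => y := funext hend
    have h2 := hDτ 1 τ
    rw [h1] at h2
    exact h2.unique (hasDerivAt_const τ y)
  -- integral of H
  have hHint : ∫ t in (0:ℝ)..1, H t = H 0 := by
    have h1 : ∀ t ∈ Set.uIcc (0:ℝ) 1, H t = H 0 := fun t _ => hHconst t
    rw [intervalIntegral.integral_congr h1, intervalIntegral.integral_const]
    norm_num
  have hHint2 : ∫ t in (0:ℝ)..1, H t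
      = (∫ t in (0:ℝ)..1,
          (-⟪gradient V (φ t τ), G (t, τ)⟫ + ⟪F (t, τ), fderiv ℝ F (t, τ) (0, 1)⟫))
        + 2 * ∫ t in (0:ℝ)..1, ⟪gradient V (φ t τ), G (t, τ)⟫ := by
    rw [← intervalIntegral.integral_const_mul, ← intervalIntegral.integral_add
      (hcg'.intervalIntegrable 0 1) (show IntervalIntegrable (fun t : ℝ => (2:ℝ) * ⟪gradient V (φ t τ), G (t, τ)⟫)
        MeasureTheory.volume 0 1 from (continuous_const.mul hcInt).intervalIntegrable 0 1)]
    exact intervalIntegral.integral_congr fun t _ => hHg t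
  have hkey : H 0 = -⟪F (0, τ), G (0, τ)⟫
      + 2 * ∫ t in (0:ℝ)..1, ⟪gradient V (φ t τ), G (t, τ)⟫ := by
    rw [← hHint, hHint2, hFTC, hG1]
    simp
  -- identify the LHS of the statement
  have hfun : (fun τ' => (1/2) * ‖deriv (fun t => φ t τ') 0‖ ^ 2 + V (φ 0 τ'))
      = fun τ' => (1/2) * ⟪F (0, τ'), F (0, τ')⟫ + V (φ 0 τ') := by
    funext τ'
    rw [derivF 0 τ', real_inner_self_eq_norm_sq]
  rw [hfun, (hHt 0).deriv, hkey]
  congr 1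
  · rw [derivG 0 τ, derivF 0 τ, real_inner_comm]
  · congr 1
    exact intervalIntegral.integral_congr fun t _ => by rw [derivG t τ]
end
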